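/- arXiv:1806.06599 — 5 statements merged into one kernel-verified Lean document; each statement's English description precedes it below -/
import Mathlib

section
/- Let A be the m×m downshift matrix with m ≥ 2. Then the relative Frobenius-norm distance from A to the set of Hermitian positive semidefinite matrices equals √3/2. -/
/-!
Write `A = X + iY` with `X`, `Y` Hermitian. For Hermitian `H` the two parts are orthogonal in the
Frobenius inner product, so `‖A - H‖² = ‖X - H‖² + ‖Y‖²`, and for `H ⪰ 0` the cross term
`tr (H X⁻) ≥ 0` shows that the positive part `X⁺` is a nearest positive semidefinite matrix to `X`,
at distance `‖X⁻‖` (Higham). The sign matrix `J = diag ((-1)ⁱ)` is unitary with `J A J* = -A`, hence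
`J X J* = -X`; conjugation by `J` swaps the roles of `X⁺` and `X⁻`, so `‖X⁺‖ = ‖X⁻‖` and
`‖X⁻‖² = ‖X‖² / 2`. Finally `tr (A²) = 0` forces `‖X‖² = ‖Y‖² = ‖A‖² / 2`, so the squared distance
is `‖A‖² / 4 + ‖A‖² / 2 = 3 ‖A‖² / 4`.
-/

open Matrix
open scoped ComplexOrder

/-- The `m × m` downshift matrix: ones on the subdiagonal, zeros elsewhere. -/
def downshift (m : ℕ) : Matrix (Fin m) (Fin m) ℂ :=
  Matrix.of fun i j => if (i : ℕ) = (j : ℕ) + 1 then 1 else 0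

/-- The Frobenius norm of a matrix. -/
noncomputable def frob {m : ℕ} (M : Matrix (Fin m) (Fin m) ℂ) : ℝ :=
  Real.sqrt (∑ i, ∑ j, ‖M i j‖ ^ 2)

open Complex
open scoped MatrixOrder ComplexStarModule

lemma isLeast_div_of_isLeast_sq {α : Type*} {P : α → Prop} {g : α → ℝ} (hg : ∀ x, 0 ≤ g x)
    {a c : ℝ} (ha : 0 < a) (hc : 0 ≤ c) (h : IsLeast {d | ∃ x, P x ∧ d = g x ^ 2} ((c * a) ^ 2)) :
    IsLeast {d | ∃ x, P x ∧ d = g x / a} c := by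
  obtain ⟨⟨x, hx, hx_eq⟩, hlow⟩ := h
  refine ⟨⟨x, hx, ?_⟩, ?_⟩
  · rw [eq_div_iff ha.ne', (sq_eq_sq₀ (hg x) (by positivity)).mp hx_eq.symm]
  · rintro _ ⟨y, hy, rfl⟩
    rw [le_div_iff₀ ha]
    exact (pow_le_pow_iff_left₀ (by positivity) (hg y) two_ne_zero).mp (hlow ⟨y, hy, rfl⟩)

section trace

variable {n : Type*} [Fintype n]

lemma re_trace_mul_nonneg_of_posSemidef [DecidableEq n] {A B : Matrix n n ℂ}
    (hA : A.PosSemidef) (hB : B.PosSemidef) : 0 ≤ (A * B).trace.re := by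
  obtain ⟨C, rfl⟩ := CStarAlgebra.nonneg_iff_eq_star_mul_self.mp hB.nonneg
  rw [← Matrix.mul_assoc, trace_mul_comm, ← Matrix.mul_assoc]
  exact (le_def.mp (hA.mul_mul_conjTranspose_same C).trace_nonneg).1

lemma im_trace_mul_eq_zero_of_isHermitian {X Y : Matrix n n ℂ} (hX : X.IsHermitian)
    (hY : Y.IsHermitian) : (X * Y).trace.im = 0 := by
  rw [← conj_eq_iff_im, ← star_def, ← trace_conjTranspose, conjTranspose_mul, hX.eq, hY.eq,
    trace_mul_comm]

end trace

section frob

variable {m : ℕ}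

lemma frob_sq_eq_re_trace (M : Matrix (Fin m) (Fin m) ℂ) : frob M ^ 2 = (Mᴴ * M).trace.re := by
  rw [frob, Real.sq_sqrt (by positivity), trace, re_sum, Finset.sum_comm]
  refine Finset.sum_congr rfl fun j _ => ?_
  simp [mul_apply, re_sum, ← normSq_eq_norm_sq, normSq_apply]

lemma frob_nonneg (M : Matrix (Fin m) (Fin m) ℂ) : 0 ≤ frob M := Real.sqrt_nonneg _

lemma frob_eq_zero_iff {M : Matrix (Fin m) (Fin m) ℂ} : frob M = 0 ↔ M = 0 := by
  rw [frob, Real.sqrt_eq_zero (by positivity),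
    Finset.sum_eq_zero_iff_of_nonneg fun _ _ => by positivity]
  simp [Finset.sum_eq_zero_iff_of_nonneg, ← Matrix.ext_iff]

lemma frob_neg (M : Matrix (Fin m) (Fin m) ℂ) : frob (-M) = frob M := by
  simp [frob]

lemma frob_mul_mul_star_of_mem_unitaryGroup {U : Matrix (Fin m) (Fin m) ℂ}
    (hU : U ∈ unitaryGroup (Fin m) ℂ) (M : Matrix (Fin m) (Fin m) ℂ) :
    frob (U * M * star U) = frob M := by
  refine (sq_eq_sq₀ (frob_nonneg _) (frob_nonneg _)).mp ?_
  have hUU : Uᴴ * U = 1 := mem_unitaryGroup_iff'.mp hU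
  have hconj : (U * M * Uᴴ)ᴴ * (U * M * Uᴴ) = U * (Mᴴ * M) * Uᴴ := by
    simp only [conjTranspose_mul, conjTranspose_conjTranspose, Matrix.mul_assoc,
      ← Matrix.mul_assoc Uᴴ U, hUU, Matrix.one_mul]
  rw [star_eq_conjTranspose, frob_sq_eq_re_trace, frob_sq_eq_re_trace, hconj, trace_mul_cycle,
    hUU, Matrix.one_mul]

section hermitian

variable {X Y : Matrix (Fin m) (Fin m) ℂ}

lemma frob_sq_add_I_smul (hX : X.IsHermitian) (hY : Y.IsHermitian) :
    frob (X + I • Y) ^ 2 = frob X ^ 2 + frob Y ^ 2 := by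
  rw [frob_sq_eq_re_trace, frob_sq_eq_re_trace, frob_sq_eq_re_trace, hX.eq, hY.eq,
    conjTranspose_add, conjTranspose_smul, hX.eq, hY.eq]
  simp [add_mul, mul_add, trace_mul_comm Y X]

lemma frob_sq_sub_of_isHermitian (hX : X.IsHermitian) (hY : Y.IsHermitian) :
    frob (X - Y) ^ 2 = frob X ^ 2 + frob Y ^ 2 - 2 * (X * Y).trace.re := by
  rw [frob_sq_eq_re_trace, frob_sq_eq_re_trace, frob_sq_eq_re_trace, hX.eq, hY.eq,
    conjTranspose_sub, hX.eq, hY.eq]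
  simp [sub_mul, mul_sub, trace_mul_comm Y X]
  ring

lemma frob_sq_sub_frob_sq_eq_re_trace_mul_self (hX : X.IsHermitian) (hY : Y.IsHermitian) :
    frob X ^ 2 - frob Y ^ 2 = ((X + I • Y) * (X + I • Y)).trace.re := by
  rw [frob_sq_eq_re_trace, frob_sq_eq_re_trace, hX.eq, hY.eq]
  simp [add_mul, mul_add, trace_mul_comm Y X, im_trace_mul_eq_zero_of_isHermitian hX hY]
  ring

lemma frob_sq_add_I_smul_sub {H : Matrix (Fin m) (Fin m) ℂ} (hX : X.IsHermitian)
    (hY : Y.IsHermitian) (hH : H.IsHermitian) :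
    frob (X + I • Y - H) ^ 2 = frob (X - H) ^ 2 + frob Y ^ 2 := by
  rw [show X + I • Y - H = (X - H) + I • Y by abel, frob_sq_add_I_smul (hX.sub hH) hY]

end hermitian

section parts

variable {S : Matrix (Fin m) (Fin m) ℂ}

lemma sub_posPart_eq_neg_negPart (hS : S.IsHermitian) : S - S⁺ = -S⁻ := by
  nth_rw 1 [← CFC.posPart_sub_negPart S hS.isSelfAdjoint]
  abel

lemma frob_sq_eq_posPart_add_negPart (hS : S.IsHermitian) :
    frob S ^ 2 = frob S⁺ ^ 2 + frob S⁻ ^ 2 := by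
  have hpos : S⁺.IsHermitian := (nonneg_iff_posSemidef.mp (CFC.posPart_nonneg S)).isHermitian
  have hneg : S⁻.IsHermitian := (nonneg_iff_posSemidef.mp (CFC.negPart_nonneg S)).isHermitian
  nth_rw 1 [← CFC.posPart_sub_negPart S hS.isSelfAdjoint]
  rw [frob_sq_sub_of_isHermitian hpos hneg, CFC.posPart_mul_negPart, trace_zero, zero_re,
    mul_zero, sub_zero]

lemma frob_sq_negPart_le_frob_sq_sub {H : Matrix (Fin m) (Fin m) ℂ} (hS : S.IsHermitian)
    (hH : H.PosSemidef) : frob S⁻ ^ 2 ≤ frob (S - H) ^ 2 := by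
  have hpos : S⁺.PosSemidef := nonneg_iff_posSemidef.mp (CFC.posPart_nonneg S)
  have hneg : S⁻.PosSemidef := nonneg_iff_posSemidef.mp (CFC.negPart_nonneg S)
  have hcross : 0 ≤ (H * S⁻).trace.re := re_trace_mul_nonneg_of_posSemidef hH hneg
  have hsplit : S - H = (S⁺ - H) - S⁻ := by
    nth_rw 1 [← CFC.posPart_sub_negPart S hS.isSelfAdjoint]
    abel
  rw [hsplit, frob_sq_sub_of_isHermitian (hpos.isHermitian.sub hH.isHermitian) hneg.isHermitian,
    sub_mul, trace_sub, CFC.posPart_mul_negPart, trace_zero, zero_sub, neg_re]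
  linarith [sq_nonneg (frob (S⁺ - H))]

variable {U : Matrix (Fin m) (Fin m) ℂ}

lemma frob_negPart_le_posPart_of_conj_eq_neg (hS : S.IsHermitian)
    (hU : U ∈ unitaryGroup (Fin m) ℂ) (hUS : U * S * star U = -S) : frob S⁻ ≤ frob S⁺ := by
  have hUU : star U * U = 1 := mem_unitaryGroup_iff'.mp hU
  have hH : (star U * S⁻ * U).PosSemidef := by
    simpa [star_eq_conjTranspose] using
      (nonneg_iff_posSemidef.mp (CFC.negPart_nonneg S)).conjTranspose_mul_mul_same U
  have hS' : S = star U * (-S) * U := by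
    rw [← hUS]
    simp only [Matrix.mul_assoc, ← Matrix.mul_assoc (star U) U, hUU, Matrix.one_mul,
      Matrix.mul_one]
  have hpn : S⁺ = S + S⁻ := sub_eq_iff_eq_add.mp (CFC.posPart_sub_negPart S hS.isSelfAdjoint)
  -- The competitor `U* S⁻ U` lies as far from `S` as `S⁺` lies from `0`.
  have hdiff : S - star U * S⁻ * U = -(star U * S⁺ * star (star U)) := by
    nth_rw 1 [hS']
    rw [star_star, hpn]
    simp only [Matrix.mul_add, Matrix.add_mul, Matrix.mul_neg, Matrix.neg_mul]
    abel
  have hle := frob_sq_negPart_le_frob_sq_sub hS hH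
  rw [hdiff, frob_neg, frob_mul_mul_star_of_mem_unitaryGroup (Unitary.star_mem hU)] at hle
  exact (pow_le_pow_iff_left₀ (frob_nonneg _) (frob_nonneg _) two_ne_zero).mp hle

lemma frob_posPart_eq_negPart_of_conj_eq_neg (hS : S.IsHermitian)
    (hU : U ∈ unitaryGroup (Fin m) ℂ) (hUS : U * S * star U = -S) : frob S⁺ = frob S⁻ := by
  refine le_antisymm ?_ (frob_negPart_le_posPart_of_conj_eq_neg hS hU hUS)
  have hle := frob_negPart_le_posPart_of_conj_eq_neg hS.neg hU (by simp [hUS])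
  rwa [CFC.negPart_neg, CFC.posPart_neg] at hle

lemma frob_sq_negPart_of_conj_eq_neg (hS : S.IsHermitian)
    (hU : U ∈ unitaryGroup (Fin m) ℂ) (hUS : U * S * star U = -S) :
    frob S⁻ ^ 2 = frob S ^ 2 / 2 := by
  rw [frob_sq_eq_posPart_add_negPart hS, frob_posPart_eq_negPart_of_conj_eq_neg hS hU hUS]
  ring

end parts

theorem isLeast_frob_sq_add_I_smul_sub_posSemidef {X Y : Matrix (Fin m) (Fin m) ℂ}
    (hX : X.IsHermitian) (hY : Y.IsHermitian) :
    IsLeast {d | ∃ H : Matrix (Fin m) (Fin m) ℂ, H.PosSemidef ∧ d = frob (X + I • Y - H) ^ 2}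
      (frob X⁻ ^ 2 + frob Y ^ 2) := by
  have hpos : X⁺.PosSemidef := nonneg_iff_posSemidef.mp (CFC.posPart_nonneg X)
  refine ⟨⟨X⁺, hpos, ?_⟩, ?_⟩
  · rw [frob_sq_add_I_smul_sub hX hY hpos.isHermitian, sub_posPart_eq_neg_negPart hX, frob_neg]
  · rintro _ ⟨H, hH, rfl⟩
    rw [frob_sq_add_I_smul_sub hX hY hH.isHermitian]
    linarith [frob_sq_negPart_le_frob_sq_sub hX hH]

lemma realPart_conj_eq_neg_of_conj_eq_neg {A U : Matrix (Fin m) (Fin m) ℂ}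
    (hUA : U * A * star U = -A) :
    U * (ℜ A : Matrix (Fin m) (Fin m) ℂ) * star U = -↑(ℜ A) := by
  have hUA' : U * star A * star U = -star A := by
    simpa [star_mul, Matrix.mul_assoc] using congr_arg star hUA
  rw [realPart_apply_coe, Matrix.mul_smul, Matrix.smul_mul, Matrix.mul_add, Matrix.add_mul,
    hUA, hUA', ← neg_add, smul_neg]

theorem isLeast_frob_sub_posSemidef_div_of_conj_eq_neg {A U : Matrix (Fin m) (Fin m) ℂ}
    (hA : A ≠ 0) (htr : (A * A).trace.re = 0) (hU : U ∈ unitaryGroup (Fin m) ℂ)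
    (hUA : U * A * star U = -A) :
    IsLeast {d | ∃ H : Matrix (Fin m) (Fin m) ℂ, H.PosSemidef ∧ d = frob (A - H) / frob A}
      (Real.sqrt 3 / 2) := by
  obtain ⟨X, Y, hX, hY, rfl, hUX⟩ : ∃ X Y : Matrix (Fin m) (Fin m) ℂ, X.IsHermitian ∧
      Y.IsHermitian ∧ X + I • Y = A ∧ U * X * star U = -X :=
    ⟨ℜ A, ℑ A, (ℜ A).2.isHermitian, (ℑ A).2.isHermitian, realPart_add_I_smul_imaginaryPart A,
      realPart_conj_eq_neg_of_conj_eq_neg hUA⟩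
  have hXY : frob X ^ 2 = frob Y ^ 2 := by
    linarith [frob_sq_sub_frob_sq_eq_re_trace_mul_self hX hY]
  have hdist : frob X⁻ ^ 2 + frob Y ^ 2 = (Real.sqrt 3 / 2 * frob (X + I • Y)) ^ 2 := by
    rw [frob_sq_negPart_of_conj_eq_neg hX hU hUX, mul_pow, div_pow, Real.sq_sqrt zero_le_three,
      frob_sq_add_I_smul hX hY]
    linarith
  refine isLeast_div_of_isLeast_sq (g := fun H => frob (X + I • Y - H))
    (fun _ => frob_nonneg _) ?_ ?_ ?_
  · exact (frob_nonneg _).lt_of_ne' (frob_eq_zero_iff.not.mpr hA)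
  · positivity
  · rw [← hdist]
    exact isLeast_frob_sq_add_I_smul_sub_posSemidef hX hY

end frob

def altSign (m : ℕ) : Matrix (Fin m) (Fin m) ℂ :=
  diagonal fun i => (-1) ^ (i : ℕ)

lemma altSign_mem_unitaryGroup (m : ℕ) : altSign m ∈ unitaryGroup (Fin m) ℂ := by
  rw [mem_unitaryGroup_iff, altSign, star_eq_conjTranspose, diagonal_conjTranspose,
    diagonal_mul_diagonal]
  simp [← mul_pow]

lemma altSign_mul_downshift_mul_star (m : ℕ) :
    altSign m * downshift m * star (altSign m) = -downshift m := by
  ext i j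
  rw [altSign, star_eq_conjTranspose, diagonal_conjTranspose, mul_diagonal, diagonal_mul]
  by_cases h : (i : ℕ) = (j : ℕ) + 1 <;> simp [downshift, h, pow_succ, ← mul_pow]

lemma trace_downshift_mul_self (m : ℕ) : (downshift m * downshift m).trace = 0 := by
  refine Finset.sum_eq_zero fun i _ => ?_
  rw [diag_apply, mul_apply]
  refine Finset.sum_eq_zero fun k _ => ?_
  simp only [downshift, of_apply, mul_ite, mul_one, mul_zero]
  split_ifs <;> first | rfl | omega

lemma downshift_ne_zero {m : ℕ} (hm : 2 ≤ m) : downshift m ≠ 0 := fun h => by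
  simpa [downshift] using congr_fun₂ h ⟨1, hm⟩ ⟨0, by omega⟩

/-- The relative Frobenius-norm distance from the downshift matrix to the set
of Hermitian positive semidefinite matrices equals `√3/2`, and it is attained. -/
theorem dist_downshift_posSemidef (m : ℕ) (hm : 2 ≤ m) :
    IsLeast {d : ℝ | ∃ H : Matrix (Fin m) (Fin m) ℂ, H.PosSemidef ∧
      d = frob (downshift m - H) / frob (downshift m)} (Real.sqrt 3 / 2) :=
  isLeast_frob_sub_posSemidef_div_of_conj_eq_neg (downshift_ne_zero hm)
    (by rw [trace_downshift_mul_self, zero_re]) (altSign_mem_unitaryGroup m)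
    (altSign_mul_downshift_mul_star m)
end

section
/- Let A ∈ C^{m×m} with trace(A) = 0 and suppose w := Σ_{i,j=1}^m a_{i,j} a_{j,i} = trace(A²) ≠ 0. Let θ̂ = arg(w) and define Â by â_{i,j} = (a_{i,j} + conj(a_{j,i}) e^{iθ̂})/2. Then Â is generalized Hermitian, and ‖A − Â‖_F² = (‖A‖_F² − |w|)/2. -/
open Matrix Real Complex

/-- A matrix `Z` is generalized Hermitian if `e^{iφ} Z + β I` is Hermitian for
some `φ ∈ (−π,π]`, `β ∈ ℂ`. -/
def GenHermitian {m : ℕ} (Z : Matrix (Fin m) (Fin m) ℂ) : Prop :=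
  ∃ (φ : ℝ) (β : ℂ), φ ∈ Set.Ioc (-π) π ∧
    (Complex.exp (φ * Complex.I) • Z + β • (1 : Matrix (Fin m) (Fin m) ℂ)).IsHermitian

lemma aux_ptwise (x y e : ℂ) (h1 : e.re^2 + e.im^2 = 1) :
    ‖(x - (starRingEnd ℂ) y * e)/2‖^2
      = (‖x‖^2 + ‖y‖^2)/4 - (x * y * (starRingEnd ℂ) e).re / 2 := by
  have hsq : ∀ z : ℂ, ‖z‖^2 = Complex.normSq z := fun z => by
    rw [Complex.sq_norm]
  simp only [hsq, Complex.normSq_apply, Complex.div_re, Complex.div_im,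
    Complex.sub_re, Complex.sub_im, Complex.mul_re, Complex.mul_im,
    Complex.conj_re, Complex.conj_im, Complex.normSq_ofNat, Complex.re_ofNat,
    Complex.im_ofNat]
  ring_nf
  linear_combination (y.re^2 + y.im^2)/4 * h1

lemma aux_conj_exp (r : ℝ) : (starRingEnd ℂ) (Complex.exp ((r:ℂ) * Complex.I))
    = Complex.exp (-(r:ℂ) * Complex.I) := by
  rw [← Complex.exp_conj]
  congr 1
  rw [_root_.map_mul, Complex.conj_ofReal, Complex.conj_I]
  ring

/-- For a trace-zero matrix `A` with `w = trace(A²) ≠ 0` and `θ̂ = arg w`, the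
matrix `Â` with entries `â_{i,j} = (a_{i,j} + conj(a_{j,i}) e^{iθ̂})/2` is
generalized Hermitian and `‖A − Â‖_F² = (‖A‖_F² − |w|)/2`. -/
theorem closest_genHermitian_trace_zero (m : ℕ) (A : Matrix (Fin m) (Fin m) ℂ)
    (htr : Matrix.trace A = 0)
    (w : ℂ) (hw : w = ∑ i, ∑ j, A i j * A j i) (hw0 : w ≠ 0)
    (Ahat : Matrix (Fin m) (Fin m) ℂ)
    (hAhat : Ahat = Matrix.of fun i j =>
      (A i j + (starRingEnd ℂ) (A j i) * Complex.exp (w.arg * Complex.I)) / 2) :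
    GenHermitian Ahat ∧
    (∑ i, ∑ j, ‖(A - Ahat) i j‖ ^ 2) =
      ((∑ i, ∑ j, ‖A i j‖ ^ 2) - ‖w‖) / 2 := by
  set θ : ℝ := w.arg with hθ
  set e : ℂ := Complex.exp ((θ:ℂ) * Complex.I) with he
  have hns : Complex.normSq e = 1 := by
    rw [← Complex.sq_norm, he, Complex.norm_exp_ofReal_mul_I]; norm_num
  have he1 : e.re ^ 2 + e.im ^ 2 = 1 := by
    rw [← hns, Complex.normSq_apply]; ring
  constructor
  · refine ⟨-θ/2, 0, ⟨?_, ?_⟩, ?_⟩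
    · have h1 : θ ≤ π := Complex.arg_le_pi w
      have h2 := Real.pi_pos
      linarith
    · have h1 : -π < θ := Complex.neg_pi_lt_arg w
      have h2 := Real.pi_pos
      linarith
    · rw [Matrix.IsHermitian]
      ext i j
      simp only [zero_smul, add_zero, Matrix.conjTranspose_apply, Matrix.smul_apply,
        smul_eq_mul, hAhat, Matrix.of_apply]
      simp only [Complex.star_def, map_div₀, map_add, _root_.map_mul,
        Complex.conj_conj, map_ofNat]
      rw [he, aux_conj_exp (-θ/2), aux_conj_exp θ]
      have h1 : Complex.exp (-(↑(-θ/2):ℂ) * Complex.I) * Complex.exp (-(θ:ℂ) * Complex.I)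
          = Complex.exp ((↑(-θ/2):ℂ) * Complex.I) := by
        rw [← Complex.exp_add]; congr 1; push_cast; ring
      have h2 : Complex.exp ((↑(-θ/2):ℂ) * Complex.I) * Complex.exp ((θ:ℂ) * Complex.I)
          = Complex.exp (-(↑(-θ/2):ℂ) * Complex.I) := by
        rw [← Complex.exp_add]; congr 1; push_cast; ring
      linear_combination (A i j / 2) * h1 - ((starRingEnd ℂ) (A j i) / 2) * h2
  · have key : ∀ i j, ‖(A - Ahat) i j‖ ^ 2
        = ‖A i j‖^2/4 + ‖A j i‖^2/4 - (A i j * A j i * (starRingEnd ℂ) e).re / 2 := by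
      intro i j
      have hentry : (A - Ahat) i j = (A i j - (starRingEnd ℂ) (A j i) * e) / 2 := by
        simp only [Matrix.sub_apply, hAhat, Matrix.of_apply]
        ring
      rw [hentry, aux_ptwise _ _ _ he1]
      ring
    simp only [key, Finset.sum_sub_distrib, Finset.sum_add_distrib, ← Finset.sum_div]
    have hswap : (∑ i, ∑ j, ‖A j i‖^2) = (∑ i, ∑ j, ‖A i j‖^2) := Finset.sum_comm
    have hR : (w * (starRingEnd ℂ) e).re
        = ∑ i, ∑ j, (A i j * A j i * (starRingEnd ℂ) e).re := by
      rw [hw, Finset.sum_mul, Complex.re_sum]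
      refine Finset.sum_congr rfl fun i _ => ?_
      rw [Finset.sum_mul, Complex.re_sum]
    have habs : (w * (starRingEnd ℂ) e).re = ‖w‖ := by
      have hw' : (‖w‖ : ℂ) * e = w := Complex.norm_mul_exp_arg_mul_I w
      have : w * (starRingEnd ℂ) e = (‖w‖ : ℂ) := by
        rw [← hw', mul_assoc, Complex.mul_conj, hns]
        simp [he, Complex.norm_exp_ofReal_mul_I]
      rw [this, Complex.ofReal_re]
    rw [hswap, ← hR, habs]
    ring
end

section
/- Let A ∈ C^{m×m} with trace(A) = 0 and w := trace(A²) ≠ 0, θ̂ = arg(w). Then the matrix Â with entries â_{i,j} = (a_{i,j} + conj(a_{j,i}) e^{iθ̂})/2 is the unique minimizer of ‖A − Z‖_F over all generalized Hermitian matrices Z, and dist_F(A, G) = √((‖A‖_F² − |w|)/2). -/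
open Matrix Real Complex

open ComplexConjugate in
lemma sum_normSq_key {m : ℕ} (A : Matrix (Fin m) (Fin m) ℂ) (w q : ℂ)
    (hw : w = ∑ i, ∑ j, A i j * A j i) (hq : Complex.normSq q = 1) :
    ∑ i, ∑ j, Complex.normSq (A i j - q * conj (A j i)) =
      2 * (∑ i, ∑ j, Complex.normSq (A i j)) - 2 * (conj q * w).re := by
  have h1 : ∀ i j : Fin m, Complex.normSq (A i j - q * conj (A j i)) =
      Complex.normSq (A i j) + Complex.normSq (A j i) - 2 * (conj q * A i j * A j i).re := by
    intro i j
    rw [Complex.normSq_sub, Complex.normSq_mul, Complex.normSq_conj, hq, one_mul]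
    congr 2
    rw [_root_.map_mul, Complex.conj_conj]
    ring
  have h3 : ∑ i : Fin m, ∑ j : Fin m, (conj q * A i j * A j i).re = (conj q * w).re := by
    rw [hw, Finset.mul_sum, Complex.re_sum]
    refine Finset.sum_congr rfl fun i _ => ?_
    rw [Finset.mul_sum, Complex.re_sum]
    exact Finset.sum_congr rfl fun j _ => by rw [mul_assoc]
  have h2 : ∑ i : Fin m, ∑ j : Fin m, Complex.normSq (A j i)
      = ∑ i : Fin m, ∑ j : Fin m, Complex.normSq (A i j) := Finset.sum_comm
  simp only [h1, Finset.sum_sub_distrib, Finset.sum_add_distrib, h2, h3, ← Finset.sum_mul,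
    ← Finset.mul_sum]
  ring

set_option maxHeartbeats 1200000 in
open ComplexConjugate in
/-- For a trace-zero matrix `A` with `w = trace(A²) ≠ 0` and `θ̂ = arg w`, the
matrix `Â` with entries `â_{i,j} = (a_{i,j} + conj(a_{j,i}) e^{iθ̂})/2` is the
unique minimizer of `‖A − Z‖_F` over all generalized Hermitian `Z`, and
`dist_F(A, 𝔾) = √((‖A‖_F² − |w|)/2)`. -/
theorem unique_closest_genHermitian (m : ℕ) (A : Matrix (Fin m) (Fin m) ℂ)
    (htr : Matrix.trace A = 0)
    (w : ℂ) (hw : w = ∑ i, ∑ j, A i j * A j i) (hw0 : w ≠ 0)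
    (Ahat : Matrix (Fin m) (Fin m) ℂ)
    (hAhat : Ahat = Matrix.of fun i j =>
      (A i j + (starRingEnd ℂ) (A j i) * Complex.exp (w.arg * Complex.I)) / 2) :
    GenHermitian Ahat ∧
    (∀ Z : Matrix (Fin m) (Fin m) ℂ, GenHermitian Z →
      frob (A - Ahat) ≤ frob (A - Z)) ∧
    (∀ Z : Matrix (Fin m) (Fin m) ℂ, GenHermitian Z →
      frob (A - Z) = frob (A - Ahat) → Z = Ahat) ∧
    frob (A - Ahat) = Real.sqrt (((∑ i, ∑ j, ‖A i j‖ ^ 2) - ‖w‖) / 2) := by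
  have hm : 0 < m := by
    rcases Nat.eq_zero_or_pos m with h | h
    · exfalso; apply hw0; rw [hw]; subst h; simp
    · exact h
  set u : ℂ := Complex.exp (w.arg * Complex.I) with hu
  have hSnn : ∀ M : Matrix (Fin m) (Fin m) ℂ,
      (0:ℝ) ≤ ∑ i, ∑ j, Complex.normSq (M i j) :=
    fun M => Finset.sum_nonneg fun i _ => Finset.sum_nonneg fun j _ => Complex.normSq_nonneg _
  have hfrob : ∀ M : Matrix (Fin m) (Fin m) ℂ,
      frob M = Real.sqrt (∑ i, ∑ j, Complex.normSq (M i j)) := by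
    intro M; unfold frob; congr 1
    refine Finset.sum_congr rfl fun i _ => Finset.sum_congr rfl fun j _ => ?_
    simp [Complex.sq_norm]
  set S : ℝ := ∑ i, ∑ j, Complex.normSq (A i j) with hS
  have hnu : Complex.normSq u = 1 := by
    rw [← Complex.sq_norm, hu, Complex.norm_exp_ofReal_mul_I]; norm_num
  have huw : conj u * w = (‖w‖ : ℂ) := by
    have h1 : (‖w‖ : ℂ) * u = w := Complex.norm_mul_exp_arg_mul_I w
    have h2 : conj u * u = 1 := by
      rw [mul_comm, Complex.mul_conj, hnu]; norm_num
    nth_rewrite 1 [← h1]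
    rw [show conj u * ((‖w‖ : ℂ) * u) = (‖w‖ : ℂ) * (conj u * u) from by
      ring, h2, mul_one]
  -- value at Ahat
  have hval : ∑ i, ∑ j, Complex.normSq ((A - Ahat) i j) = (S - ‖w‖) / 2 := by
    have he : ∀ i j, (A - Ahat) i j = (A i j - u * conj (A j i)) / 2 := by
      intro i j; rw [hAhat]; simp [Matrix.sub_apply]; ring
    have key := sum_normSq_key A w u hw hnu
    calc ∑ i, ∑ j, Complex.normSq ((A - Ahat) i j)
        = ∑ i, ∑ j, Complex.normSq (A i j - u * conj (A j i)) / 4 := by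
          refine Finset.sum_congr rfl fun i _ => Finset.sum_congr rfl fun j _ => ?_
          rw [he, Complex.normSq_div]
          norm_num [Complex.normSq_ofNat]
    _ = (∑ i, ∑ j, Complex.normSq (A i j - u * conj (A j i))) / 4 := by
          simp only [← Finset.sum_div]
    _ = (S - ‖w‖) / 2 := by
          rw [key, huw]; simp; ring
  -- the main inequality/equality analysis
  have main : ∀ Z : Matrix (Fin m) (Fin m) ℂ, GenHermitian Z →
      (S - ‖w‖) / 2 ≤ (∑ i, ∑ j, Complex.normSq ((A - Z) i j)) ∧
      ((∑ i, ∑ j, Complex.normSq ((A - Z) i j)) = (S - ‖w‖) / 2 → Z = Ahat) := by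
    rintro Z ⟨φ, β, _, hH⟩
    have h2c : conj (2:ℂ) = 2 := by
      rw [Complex.conj_eq_iff_im]; norm_num
    set v : ℂ := Complex.exp (φ * Complex.I) with hv
    have hnv : Complex.normSq v = 1 := by
      rw [← Complex.sq_norm, hv, Complex.norm_exp_ofReal_mul_I]; norm_num
    have hv1 : conj v * v = 1 := by rw [mul_comm, Complex.mul_conj, hnv]; norm_num
    set q : ℂ := conj v * conj v with hqdef
    set d : ℂ := conj v * (conj β - β) with hddef
    have hq : Complex.normSq q = 1 := by
      rw [hqdef, Complex.normSq_mul, Complex.normSq_conj, hnv]; norm_num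
    have hq1 : q * conj q = 1 := by rw [Complex.mul_conj, hq]; norm_num
    have habsq : ‖q‖ = 1 := by
      have h1 := Complex.sq_norm q
      rw [hq] at h1
      nlinarith [norm_nonneg q]
    have hZe : ∀ i j, Z i j = q * conj (Z j i) + (if i = j then d else 0) := by
      intro i j
      have h : (v • Z + β • (1 : Matrix (Fin m) (Fin m) ℂ))ᴴ i j
          = (v • Z + β • (1 : Matrix (Fin m) (Fin m) ℂ)) i j := congrFun (congrFun hH i) j
      by_cases hij : i = j
      · subst hij
        simp only [Matrix.conjTranspose_apply, Matrix.add_apply, Matrix.smul_apply,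
          smul_eq_mul, Matrix.one_apply_eq, star_def, map_add, _root_.map_mul, mul_one,
          eq_self_iff_true, if_true] at h ⊢
        linear_combination (-(conj v)) * h - (Z i i) * hv1
      · have hji : ¬ (j = i) := fun hji => hij hji.symm
        simp only [Matrix.conjTranspose_apply, Matrix.add_apply, Matrix.smul_apply,
          smul_eq_mul, Matrix.one_apply, star_def, map_add, _root_.map_mul, if_neg hij,
          if_neg hji, mul_zero, add_zero, map_zero] at h ⊢
        linear_combination (-(conj v)) * h - (Z i j) * hv1
    have hd' : q * conj d = -d := by
      have e1 := hZe ⟨0, hm⟩ ⟨0, hm⟩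
      rw [if_pos rfl] at e1
      have e2 := congrArg conj e1
      simp only [map_add, _root_.map_mul, Complex.conj_conj] at e2
      linear_combination (-1 : ℂ) * e1 - q * e2 - (Z ⟨0, hm⟩ ⟨0, hm⟩) * hq1
    set Q : Matrix (Fin m) (Fin m) ℂ :=
      Matrix.of (fun i j => (A i j - q * conj (A j i)) / 2) with hQdef
    set Y : Matrix (Fin m) (Fin m) ℂ :=
      Matrix.of (fun i j => Q i j - (if i = j then d / 2 else 0)) with hYdef
    set X : Matrix (Fin m) (Fin m) ℂ :=
      Matrix.of (fun i j => A i j - Z i j - Y i j) with hXdef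
    have hQa : ∀ i j, Q i j = (A i j - q * conj (A j i)) / 2 := fun i j => rfl
    have hYa : ∀ i j, Y i j = (A i j - q * conj (A j i)) / 2 - (if i = j then d / 2 else 0) :=
      fun i j => rfl
    have hXa : ∀ i j, X i j = A i j - Z i j - Y i j := fun i j => rfl
    have hXs : ∀ i j, X i j = q * conj (X j i) := by
      intro i j
      rw [hXa i j, hXa j i, hYa i j, hYa j i, hZe i j]
      by_cases hij : i = j
      · subst hij
        simp only [eq_self_iff_true, if_true, map_sub, map_add, _root_.map_mul, map_div₀,
          Complex.conj_conj, h2c]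
        linear_combination (-(A i i) / 2) * hq1 - (1/2 : ℂ) * hd'
      · have hji : ¬ (j = i) := fun hji => hij hji.symm
        simp only [if_neg hij, if_neg hji, sub_zero, add_zero, map_sub, map_div₀,
          _root_.map_mul, Complex.conj_conj, h2c]
        linear_combination (-(A i j) / 2) * hq1
    have hYs : ∀ i j, Y i j = -(q * conj (Y j i)) := by
      intro i j
      rw [hYa i j, hYa j i]
      by_cases hij : i = j
      · subst hij
        simp only [eq_self_iff_true, if_true, map_sub, map_div₀, _root_.map_mul,
          Complex.conj_conj, h2c]
        linear_combination (-(A i i) / 2) * hq1 - (1/2 : ℂ) * hd'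
      · have hji : ¬ (j = i) := fun hji => hij hji.symm
        simp only [if_neg hij, if_neg hji, sub_zero, map_sub, map_div₀,
          _root_.map_mul, Complex.conj_conj, h2c]
        linear_combination (-(A i j) / 2) * hq1
    have hterm : ∀ i j, X i j * conj (Y i j) = -(conj (X j i) * Y j i) := by
      intro i j
      rw [hXs i j, hYs i j, map_neg, _root_.map_mul, Complex.conj_conj]
      linear_combination (-(conj (X j i) * Y j i)) * hq1
    have hT0 : (∑ i, ∑ j, (X i j * conj (Y i j)).re) = 0 := by
      have h1 : (∑ i, ∑ j, X i j * conj (Y i j))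
          = -conj (∑ i, ∑ j, X i j * conj (Y i j)) := by
        calc (∑ i, ∑ j, X i j * conj (Y i j))
            = ∑ i, ∑ j, -(conj (X j i) * Y j i) :=
              Finset.sum_congr rfl fun i _ => Finset.sum_congr rfl fun j _ => hterm i j
          _ = -(∑ i, ∑ j, conj (X j i) * Y j i) := by
              simp only [Finset.sum_neg_distrib]
          _ = -(∑ i, ∑ j, conj (X i j) * Y i j) :=
              congrArg Neg.neg Finset.sum_comm
          _ = -conj (∑ i, ∑ j, X i j * conj (Y i j)) := by
              rw [map_sum]
              congr 1
              refine Finset.sum_congr rfl fun i _ => ?_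
              rw [map_sum]
              refine Finset.sum_congr rfl fun j _ => ?_
              rw [_root_.map_mul, Complex.conj_conj]
      have h2 := congrArg Complex.re h1
      rw [Complex.neg_re, Complex.conj_re] at h2
      have h3 : (∑ i, ∑ j, X i j * conj (Y i j)).re = 0 := by linarith
      calc (∑ i, ∑ j, (X i j * conj (Y i j)).re)
          = (∑ i, ∑ j, X i j * conj (Y i j)).re := by
            rw [Complex.re_sum]
            exact Finset.sum_congr rfl fun i _ => (Complex.re_sum _ _).symm
        _ = 0 := h3
    have hsplitE : ∀ i j, (A - Z) i j = X i j + Y i j := by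
      intro i j
      rw [Matrix.sub_apply, hXa]
      ring
    have hdecomp : ∑ i, ∑ j, Complex.normSq ((A - Z) i j)
        = (∑ i, ∑ j, Complex.normSq (X i j)) + (∑ i, ∑ j, Complex.normSq (Y i j)) := by
      have h1 : ∀ i j, Complex.normSq ((A - Z) i j)
          = Complex.normSq (X i j) + Complex.normSq (Y i j)
            + 2 * (X i j * conj (Y i j)).re := by
        intro i j
        rw [hsplitE, Complex.normSq_add]
      simp only [h1, Finset.sum_add_distrib]
      rw [show (∑ i : Fin m, ∑ j : Fin m, 2 * (X i j * conj (Y i j)).re)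
          = 2 * ∑ i : Fin m, ∑ j : Fin m, (X i j * conj (Y i j)).re from by
        rw [Finset.mul_sum]
        exact Finset.sum_congr rfl fun i _ => (Finset.mul_sum _ _ _).symm, hT0]
      ring
    have htrA : (∑ i, A i i) = 0 := by simpa [Matrix.trace, Matrix.diag] using htr
    have htrQ : (∑ i, Q i i) = 0 := by
      simp only [hQa]
      rw [← Finset.sum_div, Finset.sum_sub_distrib, ← Finset.mul_sum, ← map_sum, htrA]
      simp
    have hterm2 : ∀ i j, Complex.normSq (Y i j) = Complex.normSq (Q i j)
        + (if i = j then Complex.normSq d / 4 - 2 * (Q i i * conj (d / 2)).re else 0) := by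
      intro i j
      by_cases hij : i = j
      · subst hij
        have : Y i i = Q i i - d / 2 := by rw [hYa, hQa, if_pos rfl]
        rw [this, if_pos rfl, Complex.normSq_sub]
        have : Complex.normSq (d / 2) = Complex.normSq d / 4 := by
          rw [Complex.normSq_div]
          norm_num [Complex.normSq_ofNat]
        rw [this]
        ring
      · have : Y i j = Q i j := by rw [hYa, hQa, if_neg hij, sub_zero]
        rw [this, if_neg hij, add_zero]
    have hYsum : ∑ i, ∑ j, Complex.normSq (Y i j)
        = (∑ i, ∑ j, Complex.normSq (Q i j)) + m * Complex.normSq d / 4 := by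
      simp only [hterm2, Finset.sum_add_distrib]
      congr 1
      rw [show (∑ i : Fin m, ∑ j : Fin m,
          (if i = j then Complex.normSq d / 4 - 2 * (Q i i * conj (d / 2)).re else 0))
          = ∑ i : Fin m, (Complex.normSq d / 4 - 2 * (Q i i * conj (d / 2)).re) from
        Finset.sum_congr rfl fun i _ => by simp [Finset.sum_ite_eq]]
      rw [Finset.sum_sub_distrib]
      have h1 : (∑ i : Fin m, 2 * (Q i i * conj (d / 2)).re) = 0 := by
        rw [← Finset.mul_sum, ← Complex.re_sum, ← Finset.sum_mul, htrQ]
        simp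
      rw [h1, Finset.sum_const, Finset.card_univ, Fintype.card_fin]
      simp [nsmul_eq_mul]
      ring
    have hQsum : ∑ i, ∑ j, Complex.normSq (Q i j) = (S - (conj q * w).re) / 2 := by
      have key := sum_normSq_key A w q hw hq
      calc ∑ i, ∑ j, Complex.normSq (Q i j)
          = ∑ i, ∑ j, Complex.normSq (A i j - q * conj (A j i)) / 4 := by
            refine Finset.sum_congr rfl fun i _ => Finset.sum_congr rfl fun j _ => ?_
            rw [hQa, Complex.normSq_div]
            norm_num [Complex.normSq_ofNat]
        _ = (∑ i, ∑ j, Complex.normSq (A i j - q * conj (A j i))) / 4 := by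
            simp only [← Finset.sum_div]
        _ = (S - (conj q * w).re) / 2 := by rw [key]; ring
    have hre_le : (conj q * w).re ≤ ‖w‖ := by
      calc (conj q * w).re ≤ ‖conj q * w‖ := Complex.re_le_norm _
        _ = ‖w‖ := by
            rw [norm_mul, Complex.norm_conj, habsq, one_mul]
    have htotal : ∑ i, ∑ j, Complex.normSq ((A - Z) i j)
        = (∑ i, ∑ j, Complex.normSq (X i j)) + (S - (conj q * w).re) / 2
          + m * Complex.normSq d / 4 := by
      rw [hdecomp, hYsum, hQsum]
      ring
    have hXnn : (0:ℝ) ≤ ∑ i, ∑ j, Complex.normSq (X i j) := hSnn X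
    have hdnn : (0:ℝ) ≤ m * Complex.normSq d / 4 := by
      have := Complex.normSq_nonneg d
      positivity
    constructor
    · rw [htotal]
      linarith
    · intro heq
      rw [htotal] at heq
      have hX0 : ∑ i, ∑ j, Complex.normSq (X i j) = 0 := by linarith
      have hd0 : d = 0 := by
        have hc : (m:ℝ) * Complex.normSq d / 4 = 0 := by linarith
        have hmpos : (0:ℝ) < m := by exact_mod_cast hm
        have := Complex.normSq_nonneg d
        have : Complex.normSq d = 0 := by nlinarith
        exact Complex.normSq_eq_zero.mp this
      have hre_eq : (conj q * w).re = ‖w‖ := by linarith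
      have habsqw : ‖conj q * w‖ = ‖w‖ := by
        rw [norm_mul, Complex.norm_conj, habsq, one_mul]
      have him : (conj q * w).im = 0 := by
        have h1 := Complex.sq_norm (conj q * w)
        rw [habsqw, ← hre_eq, Complex.normSq_apply, pow_two] at h1
        have h2 : (conj q * w).im * (conj q * w).im = 0 := by linarith
        exact mul_self_eq_zero.mp h2
      have hqw : conj q * w = (‖w‖ : ℂ) := by
        apply Complex.ext
        · rw [hre_eq, Complex.ofReal_re]
        · rw [him, Complex.ofReal_im]
      have hqu : q = u := by
        have h1 : q * conj w = (‖w‖ : ℂ) := by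
          have h := congrArg conj hqw
          simpa only [_root_.map_mul, Complex.conj_conj, Complex.conj_ofReal] using h
        have h2 : u * conj w = (‖w‖ : ℂ) := by
          have h3 : (‖w‖ : ℂ) * (u * conj w)
              = (‖w‖ : ℂ) * (‖w‖ : ℂ) := by
            rw [← mul_assoc, hu, Complex.norm_mul_exp_arg_mul_I w, Complex.mul_conj,
              ← Complex.sq_norm]
            push_cast
            ring
          have habs0 : (‖w‖ : ℂ) ≠ 0 := by
            simpa using (norm_ne_zero_iff.mpr hw0)
          exact mul_left_cancel₀ habs0 h3
        have hcw : conj w ≠ 0 := by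
          simpa using hw0
        exact mul_right_cancel₀ hcw (h1.trans h2.symm)
      have hXz : ∀ i j, X i j = 0 := by
        intro i j
        have h1 : ∀ i ∈ (Finset.univ : Finset (Fin m)),
            (0:ℝ) ≤ ∑ j, Complex.normSq (X i j) :=
          fun i _ => Finset.sum_nonneg fun j _ => Complex.normSq_nonneg _
        have h2 := (Finset.sum_eq_zero_iff_of_nonneg h1).mp hX0 i (Finset.mem_univ i)
        have h3 := (Finset.sum_eq_zero_iff_of_nonneg
          (fun j _ => Complex.normSq_nonneg _)).mp h2 j (Finset.mem_univ j)
        exact Complex.normSq_eq_zero.mp h3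
      ext i j
      have h4 : A i j - Z i j - Y i j = 0 := hXz i j
      have h5 := hYa i j
      rw [hqu, hd0] at h5
      have h5' : Y i j = (A i j - u * conj (A j i)) / 2 := by
        rw [h5]
        simp
      have h6 : Z i j = A i j - Y i j := by linear_combination (-1 : ℂ) * h4
      rw [hAhat]
      simp only [Matrix.of_apply]
      rw [h6, h5']
      ring
  -- genHermitian Ahat
  have hGH : GenHermitian Ahat := by
    refine ⟨-(w.arg / 2), 0, ?_, ?_⟩
    · have := Complex.arg_mem_Ioc w
      have hπ := Real.pi_pos
      constructor
      · simp only [Set.mem_Ioc] at this; linarith [this.1, this.2]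
      · simp only [Set.mem_Ioc] at this; linarith [this.1, this.2]
    · show _ᴴ = _
      ext i j
      simp only [Matrix.conjTranspose_apply, Matrix.add_apply, Matrix.smul_apply,
        zero_smul, add_zero, hAhat, Matrix.of_apply, star_def, Matrix.zero_apply,
        smul_eq_mul]
      have hc : conj (Complex.exp ((-(w.arg / 2) : ℝ) * Complex.I)) =
          Complex.exp ((w.arg / 2 : ℝ) * Complex.I) := by
        rw [← Complex.exp_conj]
        congr 1
        rw [_root_.map_mul, Complex.conj_ofReal, Complex.conj_I]
        push_cast; ring
      have hsplit : Complex.exp ((w.arg / 2 : ℝ) * Complex.I) =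
          Complex.exp ((-(w.arg / 2) : ℝ) * Complex.I) * u := by
        rw [hu, ← Complex.exp_add]; congr 1; push_cast; ring
      have hcu : conj u = Complex.exp ((-(w.arg/2) : ℝ) * Complex.I) *
          Complex.exp ((-(w.arg/2) : ℝ) * Complex.I) := by
        rw [hu, ← Complex.exp_conj, ← Complex.exp_add]
        congr 1
        rw [_root_.map_mul, Complex.conj_ofReal, Complex.conj_I]
        push_cast; ring
      rw [_root_.map_mul, hc, map_div₀, map_add, _root_.map_mul, Complex.conj_conj]
      have h2 : conj (2:ℂ) = 2 := by
        rw [Complex.conj_eq_iff_im]; norm_num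
      have hinv : Complex.exp ((-(w.arg/2):ℝ) * Complex.I) *
          Complex.exp ((-(w.arg/2):ℝ) * Complex.I) * u = 1 := by
        rw [hu, ← Complex.exp_add, ← Complex.exp_add,
          show ((-(w.arg/2):ℝ):ℂ) * Complex.I + ((-(w.arg/2):ℝ):ℂ) * Complex.I
            + (w.arg:ℂ) * Complex.I = 0 from by push_cast; ring]
        exact Complex.exp_zero
      rw [h2, hsplit, hcu]
      linear_combination (Complex.exp ((-(w.arg/2):ℝ) * Complex.I) * A i j / 2) * hinv
  refine ⟨hGH, ?_, ?_, ?_⟩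
  · intro Z hZ
    rw [hfrob, hfrob]
    exact Real.sqrt_le_sqrt (by rw [hval]; exact (main Z hZ).1)
  · intro Z hZ heq
    rw [hfrob, hfrob] at heq
    have := (Real.sqrt_inj (hSnn _) (hSnn _)).mp heq
    exact (main Z hZ).2 (by rw [this, hval])
  · rw [hfrob, hval]
    have hS' : (∑ i, ∑ j, ‖A i j‖ ^ 2 : ℝ) = S := by
      rw [hS]
      exact Finset.sum_congr rfl fun i _ => Finset.sum_congr rfl fun j _ => by
        simp [Complex.sq_norm]
    rw [hS']
end

section
/- For any matrix A ∈ C^{m×m}, any angle θ and any real γ, the matrix Z(θ,γ) with entries z_{i,j} = (a_{i,j} + conj(a_{j,i}) e^{iθ})/2 for i ≠ j and z_{i,i} = (a_{i,i} + conj(a_{i,i}) e^{iθ} + γ e^{i(θ+π)/2})/2 satisfies ‖A − Z(θ,γ)‖_F² = ‖A‖_F²/2 + (m/4)γ² − (1/2) Re(e^{−iθ} Σ_{i,j} a_{i,j} a_{j,i}) − γ Im(e^{−iθ/2} Σ_i a_{i,i}). -/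
open Matrix Real Complex

/-- The candidate closest generalized Hermitian matrix `Z(θ,γ)` to `A`:
`z_{i,j} = (a_{i,j} + conj(a_{j,i}) e^{iθ})/2` off the diagonal and
`z_{i,i} = (a_{i,i} + conj(a_{i,i}) e^{iθ} + γ e^{i(θ+π)/2})/2`. -/
noncomputable def Zmat {m : ℕ} (A : Matrix (Fin m) (Fin m) ℂ) (θ γ : ℝ) :
    Matrix (Fin m) (Fin m) ℂ :=
  Matrix.of fun i j =>
    if i = j then
      (A i i + (starRingEnd ℂ) (A i i) * Complex.exp (θ * Complex.I) +
        (γ : ℂ) * Complex.exp (((θ + π) / 2 : ℝ) * Complex.I)) / 2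
    else (A i j + (starRingEnd ℂ) (A j i) * Complex.exp (θ * Complex.I)) / 2

/-!
Put `s = e^{iθ/2}`, so `e^{iθ} = s²` and `e^{i(θ+π)/2} = i s`. Off the diagonal,
`2 (a - z)_{ij} = a_{ij} - conj(a_{ji}) s²` with `|s²| = 1`, whose squared modulus is
`|a_{ij}|² + |a_{ji}|² - 2 Re(e^{-iθ} a_{ij} a_{ji})`; when summing, transposition leaves
`Σ |a_{ij}|²` unchanged. On the diagonal the extra
summand `-γ i s` has a real inner product with `a - conj(a) s²`, since
`(a - conj(a) s²) conj(s) = conj(s) a - conj(conj(s) a) = 2i Im(conj(s) a)`; it contributes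
`γ²/4 - γ Im(conj(s) a_{ii})` per diagonal entry.
-/

open ComplexConjugate

namespace Complex

lemma normSq_sub_conj_mul {u : ℂ} (hu : normSq u = 1) (a b : ℂ) :
    normSq (a - conj b * u) = normSq a + normSq b - 2 * (conj u * (a * b)).re := by
  rw [normSq_sub, map_mul, normSq_conj, hu, map_mul, conj_conj]
  ring_nf

lemma normSq_sub_conj_mul_sq_sub_mul_I_mul {s : ℂ} (hs : normSq s = 1) (a : ℂ) (γ : ℝ) :
    normSq (a - conj a * s ^ 2 - γ * (I * s)) =
      normSq (a - conj a * s ^ 2) + γ ^ 2 - 4 * γ * (conj s * a).im := by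
  have hs' : s * conj s = 1 := by rw [mul_conj, hs, ofReal_one]
  have h_cross : (a - conj a * s ^ 2) * conj (γ * (I * s)) =
      ((2 * γ * (conj s * a).im : ℝ) : ℂ) := by
    have h := sub_conj (conj s * a)
    simp only [map_mul, conj_conj, conj_ofReal, conj_I] at h ⊢
    push_cast at h ⊢
    linear_combination (γ * I * conj a * s) * hs' - (γ * I) * h - 2 * γ * (conj s * a).im * I_sq
  rw [normSq_sub, normSq_mul, normSq_mul, normSq_I, hs, normSq_ofReal, h_cross, ofReal_re]
  ring

end Complex

section Zmat

variable {m : ℕ} (A : Matrix (Fin m) (Fin m) ℂ) (θ γ : ℝ)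

lemma sub_Zmat_apply_self (i : Fin m) :
    (A - Zmat A θ γ) i i =
      (A i i - conj (A i i) * exp (θ * I) - γ * exp (((θ + π) / 2 : ℝ) * I)) / 2 := by
  rw [Matrix.sub_apply, Zmat, of_apply, if_pos rfl]
  ring

lemma sub_Zmat_apply_of_ne {i j : Fin m} (hij : i ≠ j) :
    (A - Zmat A θ γ) i j = (A i j - conj (A j i) * exp (θ * I)) / 2 := by
  rw [Matrix.sub_apply, Zmat, of_apply, if_neg hij]
  ring

lemma sq_norm_sub_Zmat_apply (i j : Fin m) :
    ‖(A - Zmat A θ γ) i j‖ ^ 2 =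
      (‖A i j‖ ^ 2 + ‖A j i‖ ^ 2) / 4 - 1 / 2 * (exp (-θ * I) * (A i j * A j i)).re +
        if i = j then γ ^ 2 / 4 - γ * (exp ((-(θ / 2) : ℝ) * I) * A i i).im else 0 := by
  set s := exp ((θ / 2 : ℝ) * I)
  have hs : normSq s = 1 := by rw [normSq_eq_norm_sq, norm_exp_ofReal_mul_I, one_pow]
  have hs_sq : exp (θ * I) = s ^ 2 := by
    rw [← Complex.exp_nat_mul]; push_cast; ring_nf
  have hs_sq_norm : normSq (s ^ 2) = 1 := by rw [map_pow, hs, one_pow]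
  have hs_sq_conj : conj (s ^ 2) = exp (-θ * I) := by
    rw [← hs_sq, ← Complex.exp_conj, map_mul, conj_ofReal, conj_I, mul_neg, neg_mul]
  simp only [Complex.sq_norm, ← hs_sq_conj]
  split_ifs with hij
  · subst hij
    have hs_rot : exp (((θ + π) / 2 : ℝ) * I) = I * s := by
      rw [show (((θ + π) / 2 : ℝ) : ℂ) * I = π / 2 * I + (θ / 2 : ℝ) * I by push_cast; ring,
        Complex.exp_add, exp_pi_div_two_mul_I]
    have hs_conj : conj s = exp ((-(θ / 2) : ℝ) * I) := by
      rw [← Complex.exp_conj, map_mul, conj_ofReal, conj_I]; push_cast; ring_nf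
    rw [← hs_conj, sub_Zmat_apply_self, hs_sq, hs_rot, normSq_div, normSq_ofNat,
      normSq_sub_conj_mul_sq_sub_mul_I_mul hs, normSq_sub_conj_mul hs_sq_norm]
    ring
  · rw [sub_Zmat_apply_of_ne _ _ _ hij, hs_sq, normSq_div, normSq_ofNat,
      normSq_sub_conj_mul hs_sq_norm]
    ring

end Zmat

/-- The squared Frobenius distance from `A` to `Z(θ,γ)`:
`‖A − Z(θ,γ)‖_F² = ‖A‖_F²/2 + (m/4)γ² − (1/2)Re(e^{−iθ} Σ a_{i,j}a_{j,i})
  − γ Im(e^{−iθ/2} Σ a_{i,i})`. -/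
theorem frob_dist_Zmat (m : ℕ) (A : Matrix (Fin m) (Fin m) ℂ) (θ γ : ℝ) :
    (∑ i, ∑ j, ‖(A - Zmat A θ γ) i j‖ ^ 2) =
      (∑ i, ∑ j, ‖A i j‖ ^ 2) / 2 + (m : ℝ) / 4 * γ ^ 2 -
        (1 / 2) * (Complex.exp (-θ * Complex.I) * ∑ i, ∑ j, A i j * A j i).re -
        γ * (Complex.exp ((-(θ / 2) : ℝ) * Complex.I) * ∑ i, A i i).im := by
  have h_transpose : ∑ i, ∑ j, ‖A j i‖ ^ 2 = ∑ i, ∑ j, ‖A i j‖ ^ 2 := Finset.sum_comm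
  simp only [sq_norm_sub_Zmat_apply, Finset.sum_add_distrib, Finset.sum_sub_distrib,
    Finset.sum_ite_eq, Finset.mem_univ, if_true, ← Finset.sum_div, h_transpose, Finset.mul_sum,
    Complex.re_sum, Complex.im_sum, Finset.sum_const, Finset.card_univ, Fintype.card_fin,
    nsmul_eq_mul]
  ring
end

section
/- Suppose the Arnoldi process applied to A ∈ C^{m×m} with starting vector b runs for k_P + j steps without breakdown, giving A V_i = V_{i+1} H_{i+1,i} with range(V_i) = K_i(A,b) for i ≤ k_P + j. Let M = V_{k_P} H_{k_P+1,k_P}^* V_{k_P+1}^* + (I − V_{k_P} V_{k_P}^*). Then every iterate y_i, i ≤ j, of GMRES applied to AM y = b with zero initial guess (i.e., y_i ∈ K_i(AM, b)) lies in the Krylov subspace K_{k_P+i}(A, b). -/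
/-!
Writing `A V = W H`, the preconditioned operator is `A M = A + W H (H^* W^* − V^*)`, and the
columns of `W` span `K_{k_P+1}(A, b)`. Hence `A M` maps `K_s(A, b)` into `K_{s+1}(A, b)` for every
`s ≥ k_P`, and by induction `(A M)^l b ∈ K_{k_P+l+1}(A, b)`.
-/

open Matrix Submodule

noncomputable def krylov {m : ℕ} (A : Matrix (Fin m) (Fin m) ℂ) (b : Fin m → ℂ) (k : ℕ) :
    Submodule ℂ (Fin m → ℂ) :=
  Submodule.span ℂ (Set.range fun l : Fin k => (A ^ (l : ℕ)).mulVec b)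

noncomputable def colspan {m k : ℕ} (V : Matrix (Fin m) (Fin k) ℂ) :
    Submodule ℂ (Fin m → ℂ) :=
  Submodule.span ℂ (Set.range Vᵀ)

section Krylov

variable {m : ℕ} (A : Matrix (Fin m) (Fin m) ℂ) (b : Fin m → ℂ)

lemma krylov_mono {k k' : ℕ} (h : k ≤ k') : krylov A b k ≤ krylov A b k' := by
  apply span_mono
  rintro _ ⟨l, rfl⟩
  exact ⟨Fin.castLE h l, rfl⟩

lemma pow_mulVec_mem_krylov {k l : ℕ} (h : l < k) : (A ^ l) *ᵥ b ∈ krylov A b k :=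
  subset_span ⟨⟨l, h⟩, rfl⟩

lemma mulVec_mem_krylov_succ {k : ℕ} {v : Fin m → ℂ} (hv : v ∈ krylov A b k) :
    A *ᵥ v ∈ krylov A b (k + 1) := by
  induction hv using span_induction with
  | mem x hx =>
      obtain ⟨l, rfl⟩ := hx
      rw [mulVec_mulVec, ← pow_succ']
      exact pow_mulVec_mem_krylov A b (by omega)
  | zero => simp
  | add x y _ _ hx hy => rw [mulVec_add]; exact add_mem hx hy
  | smul c x _ hx => rw [mulVec_smul]; exact smul_mem _ c hx

variable {A b}

lemma krylov_le_krylov_add {B : Matrix (Fin m) (Fin m) ℂ} {k : ℕ}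
    (hB : ∀ s, k ≤ s → ∀ v ∈ krylov A b s, B *ᵥ v ∈ krylov A b (s + 1)) (i : ℕ) :
    krylov B b i ≤ krylov A b (k + i) := by
  have hpow : ∀ l : ℕ, (B ^ l) *ᵥ b ∈ krylov A b (k + l + 1) := by
    intro l
    induction l with
    | zero => simpa using pow_mulVec_mem_krylov A b (k := k + 1) (l := 0) (by omega)
    | succ n ih =>
        rw [pow_succ', ← mulVec_mulVec]
        exact hB _ (by omega) _ ih
  refine span_le.mpr ?_
  rintro _ ⟨l, rfl⟩
  exact krylov_mono A b (by omega) (hpow l)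

end Krylov

lemma mulVec_mem_colspan {m k : ℕ} (V : Matrix (Fin m) (Fin k) ℂ) (y : Fin k → ℂ) :
    V *ᵥ y ∈ colspan V := by
  change _ ∈ span ℂ (Set.range V.col)
  rw [← range_mulVecLin]
  exact LinearMap.mem_range_self _ y

lemma add_mul_mulVec_mem_krylov_succ {m k s : ℕ} {A : Matrix (Fin m) (Fin m) ℂ}
    {b v : Fin m → ℂ} {W : Matrix (Fin m) (Fin k) ℂ} (X : Matrix (Fin k) (Fin m) ℂ)
    (hW : colspan W ≤ krylov A b (s + 1)) (hv : v ∈ krylov A b s) :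
    (A + W * X) *ᵥ v ∈ krylov A b (s + 1) := by
  rw [add_mulVec, ← mulVec_mulVec]
  exact add_mem (mulVec_mem_krylov_succ A b hv) (hW (mulVec_mem_colspan W _))

lemma mul_preconditioner_eq {m n p : ℕ} {A : Matrix (Fin m) (Fin m) ℂ}
    {V : Matrix (Fin m) (Fin n) ℂ} {W : Matrix (Fin m) (Fin p) ℂ} {H : Matrix (Fin p) (Fin n) ℂ}
    (hArnoldi : A * V = W * H) :
    A * (V * Hᴴ * Wᴴ + (1 - V * Vᴴ)) = A + W * (H * (Hᴴ * Wᴴ - Vᴴ)) := by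
  simp only [Matrix.mul_add, Matrix.mul_sub, Matrix.mul_one, ← Matrix.mul_assoc, hArnoldi]
  abel

theorem preconditioned_gmres_iterates_in_krylov_general (m kP j : ℕ)
    (A : Matrix (Fin m) (Fin m) ℂ) (b : Fin m → ℂ)
    (W : Matrix (Fin m) (Fin (kP + 1)) ℂ)
    (V : Matrix (Fin m) (Fin kP) ℂ)
    (H : Matrix (Fin (kP + 1)) (Fin kP) ℂ)
    (hArnoldi : A * V = W * H)
    (hWspan : colspan W = krylov A b (kP + 1))
    (M : Matrix (Fin m) (Fin m) ℂ)
    (hM : M = V * Hᴴ * Wᴴ + (1 - V * Vᴴ)) :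
    ∀ i ≤ j, krylov (A * M) b i ≤ krylov A b (kP + i) := by
  intro i _
  rw [hM, mul_preconditioner_eq hArnoldi]
  refine krylov_le_krylov_add (fun s hs v hv => ?_) i
  exact add_mul_mulVec_mem_krylov_succ _ (hWspan ▸ krylov_mono A b (by omega)) hv

/-- With the Arnoldi decomposition `A V_{k_P} = V_{k_P+1} H` (orthonormal
columns spanning the Krylov subspaces of `A` and `b`) and the preconditioner
`M = V_{k_P} H^* V_{k_P+1}^* + (I − V_{k_P} V_{k_P}^*)`, every GMRES iterate
`y_i ∈ K_i(AM, b)`, `i ≤ j`, lies in the Krylov subspace `K_{k_P+i}(A, b)`. -/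
theorem preconditioned_gmres_iterates_in_krylov (m kP j : ℕ)
    (A : Matrix (Fin m) (Fin m) ℂ) (b : Fin m → ℂ)
    (W : Matrix (Fin m) (Fin (kP + 1)) ℂ) (hW : Wᴴ * W = 1)
    (V : Matrix (Fin m) (Fin kP) ℂ) (hV : V = W.submatrix id Fin.castSucc)
    (H : Matrix (Fin (kP + 1)) (Fin kP) ℂ)
    (hArnoldi : A * V = W * H)
    (hVspan : colspan V = krylov A b kP)
    (hWspan : colspan W = krylov A b (kP + 1))
    (M : Matrix (Fin m) (Fin m) ℂ)
    (hM : M = V * Hᴴ * Wᴴ + (1 - V * Vᴴ)) :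
    ∀ i ≤ j, krylov (A * M) b i ≤ krylov A b (kP + i) :=
  preconditioned_gmres_iterates_in_krylov_general m kP j A b W V H hArnoldi hWspan M hM
end
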